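/- arXiv:1609.09121 — 4 statements merged into one kernel-verified Lean document; each statement's English description precedes it below -/
import Mathlib

section
/- Let Ψ be a compact subset of the annulus A = [0,1] × ℝ/ℤ and H : Ψ → Ψ a uniformly rigid homeomorphism (i.e., some subsequence of iterates H^{n_i} converges uniformly to the identity). Suppose the preimage Ψ̃ = q⁻¹(Ψ) of Ψ under the universal covering map q : [0,1] × ℝ → A is connected, and let H̃ be a lift of H to Ψ̃. Then for every ε > 0 there exist an integer k > 0 and an integer j ∈ ℤ such that for every y ∈ Ψ̃ one has |π̃₁(H̃^k(y)) − π̃₁(y) − j| < ε, where π̃₁ denotes projection onto the ℝ-coordinate. -/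
/-!
For `k = n i` with `i` large, rigidity puts the displacement `y ↦ π̃₁(H̃^k y) − π̃₁ y` within
`δ ≤ 1/2` of an integer at every point of `Ψ̃`. That integer is unique, so it depends
continuously, hence locally constantly, on `y`; by connectedness of `Ψ̃` it is constant.
-/

theorem Int.eq_of_abs_sub_lt_half {x : ℝ} {i j : ℤ} (hi : |x - i| < 1 / 2)
    (hj : |x - j| < 1 / 2) : i = j := by
  have h : |((i - j : ℤ) : ℝ)| < 1 := by
    push_cast
    linarith [abs_sub_le (i : ℝ) x j, abs_sub_comm (i : ℝ) x]
  exact sub_eq_zero.1 (Int.abs_lt_one_iff.1 (by exact_mod_cast h))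

theorem ConnectedSpace.exists_int_forall_abs_sub_lt {X : Type*} [TopologicalSpace X]
    [ConnectedSpace X] {f : X → ℝ} (hf : Continuous f) {δ : ℝ} (hδ : δ ≤ 1 / 2)
    (h : ∀ x, ∃ j : ℤ, |f x - j| < δ) : ∃ j : ℤ, ∀ x, |f x - j| < δ := by
  choose g hg using h
  have hfiber : ∀ j : ℤ, g ⁻¹' {j} = {x | |f x - j| < δ} := fun j => by
    ext x
    refine ⟨fun hx => ?_, fun hx => ?_⟩
    · rw [← Set.mem_singleton_iff.1 hx]
      exact hg x
    · exact Int.eq_of_abs_sub_lt_half ((hg x).trans_le hδ) (hx.trans_le hδ)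
  have hg_loc : IsLocallyConstant g := IsLocallyConstant.iff_isOpen_fiber.2 fun j => by
    rw [hfiber]
    exact isOpen_lt (by fun_prop) continuous_const
  obtain ⟨x₀⟩ : Nonempty X := inferInstance
  exact ⟨g x₀, fun x => hg_loc.apply_eq_of_preconnectedSpace x x₀ ▸ hg x⟩

theorem IsConnected.exists_int_forall_abs_sub_lt {X : Type*} [TopologicalSpace X] {s : Set X}
    (hs : IsConnected s) {f : X → ℝ} (hf : ContinuousOn f s) {δ : ℝ} (hδ : δ ≤ 1 / 2)
    (h : ∀ x ∈ s, ∃ j : ℤ, |f x - j| < δ) : ∃ j : ℤ, ∀ x ∈ s, |f x - j| < δ := by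
  have := Subtype.connectedSpace hs
  obtain ⟨j, hj⟩ := ConnectedSpace.exists_int_forall_abs_sub_lt hf.domRestrict hδ fun x => h x x.2
  exact ⟨j, fun x hx => hj ⟨x, hx⟩⟩

theorem abs_snd_sub_sub_lt_of_dist_lt {p y : ℝ × ℝ} {t δ : ℝ} (h : dist p (y.1, y.2 + t) < δ) :
    |p.2 - y.2 - t| < δ :=
  calc |p.2 - y.2 - t| = dist p.2 (y.2 + t) := by rw [Real.dist_eq, sub_sub]
    _ ≤ dist p (y.1, y.2 + t) := by rw [Prod.dist_eq]; exact le_max_right _ _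
    _ < δ := h

theorem pseudo_suspension_stmt0_general
    (Ψt : Set (ℝ × ℝ))
    (hconn : IsConnected Ψt)
    (Ht : ℝ × ℝ → ℝ × ℝ)
    (hcont : ContinuousOn Ht Ψt)
    (hmaps : Set.MapsTo Ht Ψt Ψt)
    (n : ℕ → ℕ) (hpos : ∀ i, 0 < n i)
    (hrigid : ∀ ε > (0:ℝ), ∃ I : ℕ, ∀ i ≥ I, ∀ y ∈ Ψt,
      ∃ j : ℤ, dist (Ht^[n i] y) (y.1, y.2 + (j : ℝ)) < ε) :
    ∀ ε > (0:ℝ), ∃ k : ℕ, 0 < k ∧ ∃ j : ℤ, ∀ y ∈ Ψt,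
      |(Ht^[k] y).2 - y.2 - (j : ℝ)| < ε := by
  intro ε hε
  obtain ⟨I, hI⟩ := hrigid (min ε (1 / 2)) (lt_min hε one_half_pos)
  refine ⟨n I, hpos I, ?_⟩
  have hdisp_cont : ContinuousOn (fun y => (Ht^[n I] y).2 - y.2) Ψt :=
    (continuous_snd.comp_continuousOn (hcont.iterate hmaps (n I))).sub
      continuous_snd.continuousOn
  have hnear_int : ∀ y ∈ Ψt, ∃ j : ℤ, |(Ht^[n I] y).2 - y.2 - j| < min ε (1 / 2) :=
    fun y hy => (hI I le_rfl y hy).imp fun _ => abs_snd_sub_sub_lt_of_dist_lt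
  obtain ⟨j, hj⟩ := hconn.exists_int_forall_abs_sub_lt hdisp_cont (min_le_right _ _) hnear_int
  exact ⟨j, fun y hy => (hj y hy).trans_le (min_le_left _ _)⟩

/-- For a uniformly rigid homeomorphism of a compact subset of the annulus
whose lift to the universal cover `[0,1] × ℝ` is connected, for every `ε > 0` there are
`k > 0` and `j ∈ ℤ` with `|π̃₁(H̃^k y) − π̃₁ y − j| < ε` for all `y` in the lift.
Here the annulus picture is modelled in the cover: `Ψt = q⁻¹(Ψ)` is a closed, connected,
deck-invariant subset of the strip, `Ht` is a lift of `H` (deck-equivariant), and uniform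
rigidity of `H` is expressed through the covering (a local isometry): some subsequence of
iterates is, up to a deck translation at each point, uniformly close to the identity. -/
theorem pseudo_suspension_stmt0
    (Ψt : Set (ℝ × ℝ))
    (hsub : Ψt ⊆ Set.Icc (0:ℝ) 1 ×ˢ (Set.univ : Set ℝ))
    (hclosed : IsClosed Ψt)
    (hne : Ψt.Nonempty)
    (hconn : IsConnected Ψt)
    (hdeck : ∀ y : ℝ × ℝ, y ∈ Ψt ↔ (y.1, y.2 + 1) ∈ Ψt)
    (Ht : ℝ × ℝ → ℝ × ℝ)
    (hcont : ContinuousOn Ht Ψt)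
    (hmaps : Set.MapsTo Ht Ψt Ψt)
    (hbij : Set.BijOn Ht Ψt Ψt)
    (hequiv : ∀ y ∈ Ψt, Ht (y.1, y.2 + 1) = ((Ht y).1, (Ht y).2 + 1))
    (n : ℕ → ℕ) (hmono : StrictMono n) (hpos : ∀ i, 0 < n i)
    (hrigid : ∀ ε > (0:ℝ), ∃ I : ℕ, ∀ i ≥ I, ∀ y ∈ Ψt,
      ∃ j : ℤ, dist (Ht^[n i] y) (y.1, y.2 + (j : ℝ)) < ε) :
    ∀ ε > (0:ℝ), ∃ k : ℕ, 0 < k ∧ ∃ j : ℤ, ∀ y ∈ Ψt,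
      |(Ht^[k] y).2 - y.2 - (j : ℝ)| < ε :=
  pseudo_suspension_stmt0_general Ψt hconn Ht hcont hmaps n hpos hrigid
end

section
/- Let X be the inverse limit of a sequence of compact metric spaces X_i with continuous surjective bonding maps f_i : X_{i+1} → X_i, and let h : X → X be the homeomorphism induced by homeomorphisms h_i : X_i → X_i commuting with the bonding maps, i.e., h((x_i)) = (h_i(x_i)). Then h is topologically weakly mixing if and only if every h_i is topologically weakly mixing. -/
/-!
Each coordinate projection `π i` of the inverse limit is continuous, surjective (a point of `X i`
is lifted step by step along the surjective bonding maps) and semiconjugates `H` to `h i`; so `h i`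
is a factor of `H` and inherits weak mixing. Conversely, continuity of the bonding maps makes every
open set of the inverse limit contain, for all large `N`, a cylinder `π N ⁻¹' W` around any given
point, with `W` open in `X N`. Choosing cylinders of a common level `N` inside the four open sets,
weak mixing of `h N` gives a common time `n`, and its witnesses lift along the surjection `π N` to
witnesses for `H`.
-/

/-- Topological weak mixing: the product system is topologically transitive. -/
def IsWeaklyMixing {X : Type*} [TopologicalSpace X] (g : X → X) : Prop :=
  ∀ U₁ V₁ U₂ V₂ : Set X, IsOpen U₁ → IsOpen V₁ → IsOpen U₂ → IsOpen V₂ →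
    U₁.Nonempty → V₁.Nonempty → U₂.Nonempty → V₂.Nonempty →
    ∃ n : ℕ, (g^[n] '' U₁ ∩ V₁).Nonempty ∧ (g^[n] '' U₂ ∩ V₂).Nonempty

open Function Set Filter

section Factor

variable {Y Z : Type*} {F : Y → Y} {g : Z → Z} {π : Y → Z}

theorem Function.Semiconj.image_preimage_inter_preimage_nonempty_iff (hπ : Semiconj π F g)
    (hπs : Surjective π) {A B : Set Z} :
    (F '' (π ⁻¹' A) ∩ π ⁻¹' B).Nonempty ↔ (g '' A ∩ B).Nonempty := by
  constructor
  · rintro ⟨_, ⟨y, hyA, rfl⟩, hyB⟩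
    exact ⟨g (π y), mem_image_of_mem g hyA, by rwa [← hπ y]⟩
  · rintro ⟨_, ⟨z, hzA, rfl⟩, hzB⟩
    obtain ⟨y, rfl⟩ := hπs z
    exact ⟨F y, mem_image_of_mem F hzA, by rwa [mem_preimage, hπ y]⟩

variable [TopologicalSpace Y] [TopologicalSpace Z]

theorem IsWeaklyMixing.of_semiconj (hF : IsWeaklyMixing F) (hπc : Continuous π)
    (hπs : Surjective π) (hπ : Semiconj π F g) : IsWeaklyMixing g := by
  intro U₁ V₁ U₂ V₂ hU₁ hV₁ hU₂ hV₂ hU₁ne hV₁ne hU₂ne hV₂ne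
  obtain ⟨n, h₁, h₂⟩ := hF _ _ _ _ (hU₁.preimage hπc) (hV₁.preimage hπc) (hU₂.preimage hπc)
    (hV₂.preimage hπc) (hU₁ne.preimage hπs) (hV₁ne.preimage hπs) (hU₂ne.preimage hπs)
    (hV₂ne.preimage hπs)
  have hπn := fun {A B : Set Z} ↦
    (hπ.iterate_right n).image_preimage_inter_preimage_nonempty_iff hπs (A := A) (B := B)
  exact ⟨n, hπn.1 h₁, hπn.1 h₂⟩

end Factor

theorem IsWeaklyMixing.of_eventually_cylinder {Y ι : Type*} {Z : ι → Type*} [TopologicalSpace Y]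
    [∀ N, TopologicalSpace (Z N)] {l : Filter ι} [l.NeBot] {F : Y → Y} {g : ∀ N, Z N → Z N}
    {π : ∀ N, Y → Z N} (hπs : ∀ N, Surjective (π N)) (hπ : ∀ N, Semiconj (π N) F (g N))
    (hcyl : ∀ U : Set Y, IsOpen U → ∀ y ∈ U,
      ∀ᶠ N in l, ∃ W : Set (Z N), IsOpen W ∧ π N y ∈ W ∧ π N ⁻¹' W ⊆ U)
    (hg : ∀ N, IsWeaklyMixing (g N)) : IsWeaklyMixing F := by
  rintro U₁ V₁ U₂ V₂ hU₁ hV₁ hU₂ hV₂ ⟨x₁, hx₁⟩ ⟨y₁, hy₁⟩ ⟨x₂, hx₂⟩ ⟨y₂, hy₂⟩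
  obtain ⟨N, ⟨A₁, hA₁, hxA₁, hA₁U⟩, ⟨B₁, hB₁, hyB₁, hB₁V⟩, ⟨A₂, hA₂, hxA₂, hA₂U⟩,
      ⟨B₂, hB₂, hyB₂, hB₂V⟩⟩ :=
    ((hcyl _ hU₁ x₁ hx₁).and <| (hcyl _ hV₁ y₁ hy₁).and <| (hcyl _ hU₂ x₂ hx₂).and
      (hcyl _ hV₂ y₂ hy₂)).exists
  obtain ⟨n, h₁, h₂⟩ := hg N A₁ B₁ A₂ B₂ hA₁ hB₁ hA₂ hB₂ ⟨_, hxA₁⟩ ⟨_, hyB₁⟩ ⟨_, hxA₂⟩ ⟨_, hyB₂⟩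
  have hπn := fun {A B : Set (Z N)} ↦
    ((hπ N).iterate_right n).image_preimage_inter_preimage_nonempty_iff (hπs N) (A := A) (B := B)
  exact ⟨n, (hπn.2 h₁).mono (inter_subset_inter (image_mono hA₁U) hB₁V),
    (hπn.2 h₂).mono (inter_subset_inter (image_mono hA₂U) hB₂V)⟩

section

variable {X : ℕ → Type*} (f : ∀ i, X (i + 1) → X i)

abbrev InverseLimit : Type _ := {x : ∀ i, X i // ∀ i, f i (x (i + 1)) = x i}

namespace InverseLimit

def proj (i : ℕ) (x : InverseLimit f) : X i := x.1 i

variable {f}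

theorem continuous_proj [∀ i, TopologicalSpace (X i)] (i : ℕ) : Continuous (proj f i) :=
  (continuous_apply i).comp continuous_subtype_val

noncomputable def liftFromZero (hfs : ∀ i, Surjective (f i)) (x : X 0) : ∀ n, X n
  | 0 => x
  | n + 1 => surjInv (hfs n) (liftFromZero hfs x n)

def cons (y : InverseLimit (X := fun i => X (i + 1)) fun i => f (i + 1)) : InverseLimit f :=
  ⟨fun | 0 => f 0 (y.1 0) | i + 1 => y.1 i, fun | 0 => rfl | i + 1 => y.2 i⟩

theorem surjective_proj (hfs : ∀ i, Surjective (f i)) (j : ℕ) : Surjective (proj f j) := by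
  induction j generalizing X with
  | zero =>
    intro x
    exact ⟨⟨liftFromZero hfs x, fun n => surjInv_eq (hfs n) _⟩, rfl⟩
  | succ j ih =>
    intro x
    obtain ⟨y, hy⟩ := ih (fun i => hfs (i + 1)) x
    exact ⟨cons y, hy⟩

variable [∀ i, TopologicalSpace (X i)]

theorem eventually_exists_preimage_proj_eq (hfc : ∀ i, Continuous (f i)) (i : ℕ)
    {u : Set (X i)} (hu : IsOpen u) :
    ∀ᶠ N in atTop, ∃ W : Set (X N), IsOpen W ∧ proj f N ⁻¹' W = proj f i ⁻¹' u := by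
  refine eventually_atTop.2 ⟨i, fun N hN => ?_⟩
  induction N, hN using Nat.le_induction with
  | base => exact ⟨u, hu, rfl⟩
  | succ N _ ih =>
    obtain ⟨W, hW, hWu⟩ := ih
    refine ⟨f N ⁻¹' W, hW.preimage (hfc N), ?_⟩
    rw [← hWu]
    ext y
    simp only [mem_preimage, proj, y.2 N]

theorem eventually_exists_cylinder_subset (hfc : ∀ i, Continuous (f i))
    {U : Set (InverseLimit f)} (hU : IsOpen U) {x : InverseLimit f} (hx : x ∈ U) :
    ∀ᶠ N in atTop, ∃ W : Set (X N), IsOpen W ∧ proj f N x ∈ W ∧ proj f N ⁻¹' W ⊆ U := by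
  obtain ⟨V, hV, rfl⟩ := isOpen_induced_iff.mp hU
  obtain ⟨I, u, hu, hIV⟩ := isOpen_pi_iff.mp hV x.1 hx
  have hW : ∀ᶠ N in atTop, ∀ i : I, ∃ W : Set (X N), IsOpen W ∧
      proj f N ⁻¹' W = proj f i ⁻¹' u i :=
    eventually_all.2 fun i => eventually_exists_preimage_proj_eq hfc i (hu i i.2).1
  filter_upwards [hW] with N hN
  choose W hWo hWu using hN
  have hcyl : proj f N ⁻¹' ⋂ i, W i = ⋂ i : I, proj f i ⁻¹' u i := by
    rw [preimage_iInter]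
    exact iInter_congr hWu
  refine ⟨⋂ i, W i, isOpen_iInter_of_finite hWo, ?_, ?_⟩
  · rw [← mem_preimage, hcyl, mem_iInter]
    exact fun i => (hu i i.2).2
  · rw [hcyl]
    exact fun y hy => hIV fun i hi => mem_iInter.1 hy ⟨i, hi⟩

end InverseLimit

end

theorem pseudo_suspension_stmt4_general
    {X : ℕ → Type*} [∀ i, MetricSpace (X i)]
    (f : ∀ i, X (i + 1) → X i)
    (hfc : ∀ i, Continuous (f i)) (hfs : ∀ i, Function.Surjective (f i))
    (h : ∀ i, X i ≃ₜ X i)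
    (H : {x : ∀ i, X i // ∀ i, f i (x (i + 1)) = x i} →
         {x : ∀ i, X i // ∀ i, f i (x (i + 1)) = x i})
    (hH : ∀ x i, (H x).1 i = h i (x.1 i)) :
    IsWeaklyMixing H ↔ ∀ i, IsWeaklyMixing (⇑(h i)) := by
  have hsemi : ∀ i, Semiconj (InverseLimit.proj f i) H (h i) := fun i x => hH x i
  refine ⟨fun hmix i => hmix.of_semiconj (InverseLimit.continuous_proj i)
    (InverseLimit.surjective_proj hfs i) (hsemi i), fun hmix => ?_⟩
  exact IsWeaklyMixing.of_eventually_cylinder (InverseLimit.surjective_proj hfs) hsemi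
    (fun _ hU _ hx => InverseLimit.eventually_exists_cylinder_subset hfc hU hx) hmix

/-- part of Proposition 9.1: Let `X` be the inverse limit of compact metric
spaces `X i` with continuous surjective bonding maps `f i : X (i+1) → X i`, and let
`H : X → X` be the homeomorphism induced coordinatewise by homeomorphisms `h i`
commuting with the bonding maps.  Then `H` is topologically weakly mixing iff every
`h i` is topologically weakly mixing. -/
theorem pseudo_suspension_stmt4
    {X : ℕ → Type*} [∀ i, MetricSpace (X i)] [∀ i, CompactSpace (X i)]
    (f : ∀ i, X (i + 1) → X i)
    (hfc : ∀ i, Continuous (f i)) (hfs : ∀ i, Function.Surjective (f i))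
    (h : ∀ i, X i ≃ₜ X i)
    (hcomm : ∀ i (x : X (i + 1)), f i (h (i + 1) x) = h i (f i x))
    (H : {x : ∀ i, X i // ∀ i, f i (x (i + 1)) = x i} →
         {x : ∀ i, X i // ∀ i, f i (x (i + 1)) = x i})
    (hH : ∀ x i, (H x).1 i = h i (x.1 i)) :
    IsWeaklyMixing H ↔ ∀ i, IsWeaklyMixing (⇑(h i)) :=
  pseudo_suspension_stmt4_general f hfc hfs h H hH
end

section
/- Let X be the inverse limit of compact metric spaces X_i with continuous surjective bonding maps f_i : X_{i+1} → X_i, and let h : X → X be induced coordinatewise by homeomorphisms h_i : X_i → X_i. Then h is uniformly rigid if and only if every h_i is uniformly rigid. Moreover, for the forward direction one must use that for each ε > 0 there exist N and ε_N > 0 such that if two threads agree to within ε_N in their N-th coordinate, then they are within ε of each other in X; the uniform rigidity of h_N then supplies arbitrarily large k with h_N^k within ε_N of the identity, whence h^k is within ε of the identity. -/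
/-!
Both directions come from the coordinate projections `π_i`, which semiconjugate `H` to `h i`.
Since the bonding maps are surjective, so is every `π_i`, and uniform convergence of `H^[n j]`
to the identity is pushed down to each coordinate.  Conversely, since the bonding maps are
uniformly continuous, the `N`-th coordinate controls all coordinates below it, so every
entourage of the inverse limit contains the pull-back of an entourage of a single `X N`;
rigidity of `h N` then yields arbitrarily large `k` with `H^[k]` inside that entourage, and a
diagonal extraction along a countable basis of the uniformity gives one rigidity sequence.
-/

/-- A self-map `g` of a uniform space is uniformly rigid if some subsequence of its
iterates converges uniformly to the identity. -/
def IsUniformlyRigid {X : Type*} [UniformSpace X] (g : X → X) : Prop :=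
  ∃ n : ℕ → ℕ, StrictMono n ∧
    TendstoUniformly (fun j x => g^[n j] x) id Filter.atTop

open Filter Function Uniformity

universe u

section Rigidity

variable {X Y : Type*} [UniformSpace X] [UniformSpace Y] {g : X → X}

theorem IsUniformlyRigid.frequently_forall_mem (hg : IsUniformlyRigid g) {U : Set (X × X)}
    (hU : U ∈ 𝓤 X) : ∃ᶠ k in atTop, ∀ x, (x, g^[k] x) ∈ U := by
  obtain ⟨n, hn, hconv⟩ := hg
  exact hn.tendsto_atTop.frequently (hconv U hU).frequently

theorem isUniformlyRigid_of_frequently [(𝓤 X).IsCountablyGenerated]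
    (h : ∀ U ∈ 𝓤 X, ∃ᶠ k in atTop, ∀ x, (x, g^[k] x) ∈ U) : IsUniformlyRigid g := by
  obtain ⟨U, hU⟩ := (𝓤 X).exists_antitone_basis
  obtain ⟨n, hn, hnU⟩ := extraction_forall_of_frequently fun j => h (U j) (hU.mem j)
  refine ⟨n, hn, fun V hV => ?_⟩
  obtain ⟨j₀, -, hj₀⟩ := hU.toHasBasis.mem_iff.mp hV
  filter_upwards [eventually_ge_atTop j₀] with j hj x
  exact hj₀ (hU.antitone hj (hnU j x))

theorem IsUniformlyRigid.semiconj {g' : Y → Y} {π : X → Y} (hg : IsUniformlyRigid g)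
    (hπ : UniformContinuous π) (hsurj : Surjective π) (hsc : Semiconj π g g') :
    IsUniformlyRigid g' := by
  obtain ⟨n, hn, hconv⟩ := hg
  refine ⟨n, hn, fun U hU => ?_⟩
  filter_upwards [hconv _ (hπ hU)] with j hj y
  obtain ⟨x, rfl⟩ := hsurj y
  rw [← hsc.iterate_right (n j) x]
  exact hj x

end Rigidity

section InverseLimit

variable {X : ℕ → Type u} (f : ∀ i, X (i + 1) → X i)

abbrev InvLimit : Type u := {x : ∀ i, X i // ∀ i, f i (x (i + 1)) = x i}

theorem InvLimit.surjective_proj (hfs : ∀ i, Surjective (f i)) (N : ℕ) :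
    Surjective fun x : InvLimit f => x.1 N := by
  induction N generalizing X with
  | zero =>
    intro a
    choose s hs using hfs
    exact ⟨⟨fun j => Nat.rec a (fun j z => s j z) j, fun j => hs j _⟩, rfl⟩
  | succ N ih =>
    intro a
    obtain ⟨x, rfl⟩ := ih (X := fun i => X (i + 1)) (fun i => f (i + 1)) (fun i => hfs (i + 1)) a
    refine ⟨⟨fun i => Nat.casesOn i (f 0 (x.1 0)) x.1, fun i => ?_⟩, rfl⟩
    cases i with
    | zero => rfl
    | succ i => exact x.2 i

variable [∀ i, UniformSpace (X i)]

theorem InvLimit.uniformContinuous_proj (i : ℕ) :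
    UniformContinuous fun x : InvLimit f => x.1 i :=
  (Pi.uniformContinuous_proj X i).comp uniformContinuous_subtype_val

def InvLimit.coordUniformity (i : ℕ) : Filter (InvLimit f × InvLimit f) :=
  comap (fun p => (p.1.1 i, p.2.1 i)) (𝓤 (X i))

theorem InvLimit.uniformity_eq : 𝓤 (InvLimit f) = ⨅ i, coordUniformity f i := by
  rw [uniformity_subtype, Pi.uniformity, comap_iInf]
  simp only [comap_comap]
  rfl

instance InvLimit.isCountablyGenerated_uniformity [∀ i, (𝓤 (X i)).IsCountablyGenerated] :
    (𝓤 (InvLimit f)).IsCountablyGenerated := by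
  rw [uniformity_eq]
  unfold coordUniformity
  infer_instance

theorem InvLimit.antitone_coordUniformity (hf : ∀ i, UniformContinuous (f i)) :
    Antitone (coordUniformity f) := by
  refine antitone_nat_of_succ_le fun i => ?_
  have hthread : (fun p : InvLimit f × InvLimit f => (p.1.1 i, p.2.1 i)) =
      Prod.map (f i) (f i) ∘ fun p => (p.1.1 (i + 1), p.2.1 (i + 1)) := by
    funext p
    simp only [comp_apply, Prod.map_apply, p.1.2 i, p.2.2 i]
  rw [coordUniformity, coordUniformity, hthread, ← comap_comap]
  exact comap_mono (hf i).le_comap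

theorem InvLimit.exists_coord_entourage (hf : ∀ i, UniformContinuous (f i))
    {W : Set (InvLimit f × InvLimit f)} (hW : W ∈ 𝓤 (InvLimit f)) :
    ∃ N, ∃ V ∈ 𝓤 (X N), ∀ x y : InvLimit f, (x.1 N, y.1 N) ∈ V → (x, y) ∈ W := by
  rw [uniformity_eq, mem_iInf_of_directed (antitone_coordUniformity f hf).directed_ge] at hW
  obtain ⟨N, V, hV, hVW⟩ := hW
  exact ⟨N, V, hV, fun x y hxy => hVW hxy⟩

theorem InvLimit.isUniformlyRigid_of_semiconj [∀ i, (𝓤 (X i)).IsCountablyGenerated]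
    (hf : ∀ i, UniformContinuous (f i)) {h : ∀ i, X i → X i} {H : InvLimit f → InvLimit f}
    (hsc : ∀ i, Semiconj (fun x : InvLimit f => x.1 i) H (h i))
    (hrig : ∀ i, IsUniformlyRigid (h i)) : IsUniformlyRigid H := by
  refine isUniformlyRigid_of_frequently fun W hW => ?_
  obtain ⟨N, V, hV, hVW⟩ := exists_coord_entourage f hf hW
  refine ((hrig N).frequently_forall_mem hV).mono fun k hk x => hVW _ _ ?_
  simpa only [(hsc N).iterate_right k x] using hk (x.1 N)

end InverseLimit

theorem pseudo_suspension_stmt6_general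
    {X : ℕ → Type*} [∀ i, MetricSpace (X i)] [∀ i, CompactSpace (X i)]
    (f : ∀ i, X (i + 1) → X i)
    (hfc : ∀ i, Continuous (f i)) (hfs : ∀ i, Function.Surjective (f i))
    (h : ∀ i, X i ≃ₜ X i)
    (H : {x : ∀ i, X i // ∀ i, f i (x (i + 1)) = x i} →
         {x : ∀ i, X i // ∀ i, f i (x (i + 1)) = x i})
    (hH : ∀ x i, (H x).1 i = h i (x.1 i)) :
    IsUniformlyRigid H ↔ ∀ i, IsUniformlyRigid (⇑(h i)) := by
  have hsc : ∀ i, Semiconj (fun x : InvLimit f => x.1 i) H (h i) := fun i x => hH x i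
  refine ⟨fun hrig i => ?_, InvLimit.isUniformlyRigid_of_semiconj f
    (fun i => CompactSpace.uniformContinuous_of_continuous (hfc i)) hsc⟩
  exact hrig.semiconj (InvLimit.uniformContinuous_proj f i) (InvLimit.surjective_proj f hfs i)
    (hsc i)

/-- part of Proposition 9.1: Let `X` be the inverse limit of compact metric
spaces `X i` with continuous surjective bonding maps `f i : X (i+1) → X i`, and let
`H : X → X` be the homeomorphism induced coordinatewise by homeomorphisms `h i`
commuting with the bonding maps.  Then `H` is uniformly rigid iff every `h i` is
uniformly rigid.  (The inverse limit carries the uniformity induced from the countable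
product, equivalently the metric `d(x,y) = Σ 2^{-i} d_i(x_i,y_i)`; two threads agreeing
to within `ε_N` in the `N`-th coordinate are within `ε` of each other in `X`.) -/
theorem pseudo_suspension_stmt6
    {X : ℕ → Type*} [∀ i, MetricSpace (X i)] [∀ i, CompactSpace (X i)]
    (f : ∀ i, X (i + 1) → X i)
    (hfc : ∀ i, Continuous (f i)) (hfs : ∀ i, Function.Surjective (f i))
    (h : ∀ i, X i ≃ₜ X i)
    (hcomm : ∀ i (x : X (i + 1)), f i (h (i + 1) x) = h i (f i x))
    (H : {x : ∀ i, X i // ∀ i, f i (x (i + 1)) = x i} →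
         {x : ∀ i, X i // ∀ i, f i (x (i + 1)) = x i})
    (hH : ∀ x i, (H x).1 i = h i (x.1 i)) :
    IsUniformlyRigid H ↔ ∀ i, IsUniformlyRigid (⇑(h i)) :=
  pseudo_suspension_stmt6_general f hfc hfs h H hH
end

section
/- Let T : X → X be a continuous map of a compact metric space, let S : Y → Y be a continuous map of a compact metric space, and let π : X → Y be a continuous surjective factor map (π ∘ T = S ∘ π) that is finite-to-one, i.e., there is a uniform bound M on the cardinality of fibers π⁻¹(y). Then the topological entropies coincide: h_top(T) = h_top(S). -/
/-!
The inequality `h(S) ≤ h(T)` holds for every uniformly continuous factor map. For the converse fix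
an entourage `U` and a time `n`. Since `π` is a closed map, its fibres vary upper semicontinuously,
so there is an entourage `V` of `Y` such that the preimage of every `V`-ball is covered by at most
`M` dynamical `(U, n)`-balls. Cutting an orbit segment of length `n k` into `k` blocks of length
`n`, a point of `X` is located up to `U ○ U` by a point of a `(V, n k)`-cover of `Y` together with
one of `M` balls for each block. Hence `N_T(U ○ U, n k) ≤ N_S(V, n k) M ^ k`, that is
`n h_{U ○ U}(T) ≤ n h(S) + log M` for every `n`, and `h(T) ≤ h(S)` follows.
-/

open Dynamics Set Function Uniformity UniformSpace ENNReal ExpGrowth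
open scoped SetRel

lemma EReal.le_of_forall_natCast_mul_le_mul_add {a b c : EReal} (hc : c ≠ ⊤)
    (h : ∀ n : ℕ, n ≠ 0 → n * a ≤ n * b + c) : a ≤ b := by
  by_contra! hba
  obtain ⟨r, hbr, hra⟩ := EReal.exists_between_coe_real hba
  obtain ⟨s, hrs, hsa⟩ := EReal.exists_between_coe_real hra
  obtain ⟨d, hcd, -⟩ := EReal.exists_between_coe_real hc.lt_top
  have hrs : r < s := EReal.coe_lt_coe_iff.1 hrs
  obtain ⟨n, hn⟩ := exists_nat_gt (d / (s - r))
  have hE : ((n + 1 : ℕ) : EReal) * s ≤ ((n + 1 : ℕ) : EReal) * r + d :=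
    calc ((n + 1 : ℕ) : EReal) * s ≤ (n + 1 : ℕ) * a := by gcongr
      _ ≤ (n + 1 : ℕ) * b + c := h (n + 1) n.succ_ne_zero
      _ ≤ (n + 1 : ℕ) * r + d := by gcongr
  have hR : ((n + 1 : ℕ) : ℝ) * s ≤ (n + 1 : ℕ) * r + d := by exact_mod_cast hE
  rw [div_lt_iff₀ (by linarith)] at hn
  push_cast at hR
  nlinarith

lemma ExpGrowth.natCast_mul_expGrowthSup_le_of_le_mul_pow {u v : ℕ → ℝ≥0∞} (hu : Monotone u)
    (hv : Monotone v) {n : ℕ} (hn : n ≠ 0) {c : ℝ≥0∞} (hc₀ : c ≠ 0) (hc : c ≠ ∞)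
    (huv : ∀ k, u (n * k) ≤ v (n * k) * c ^ k) :
    n * expGrowthSup u ≤ n * expGrowthSup v + log c := by
  have hpow := expGrowthSup_pow (b := c)
  rw [← hu.expGrowthSup_comp_mul hn, ← hv.expGrowthSup_comp_mul hn, ← hpow]
  refine (expGrowthSup_monotone huv).trans (expGrowthSup_mul_le ?_ ?_) <;> rw [hpow]
  · exact .inr (log_eq_top_iff.not.2 hc)
  · exact .inr (log_eq_bot_iff.not.2 hc₀)

lemma IsClosedMap.exists_mem_uniformity_preimage_ball_subset {X Y : Type*} [TopologicalSpace X]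
    [UniformSpace Y] [CompactSpace Y] {π : X → Y} (hπ : IsClosedMap π) {O : Y → Set X}
    (hO : ∀ y, IsOpen (O y)) (hfiber : ∀ y, π ⁻¹' {y} ⊆ O y) :
    ∃ V ∈ 𝓤 Y, ∀ y, ∃ y', π ⁻¹' ball y V ⊆ O y' := by
  obtain ⟨V, hV, hVO⟩ := lebesgue_number_lemma isCompact_univ
    (fun y ↦ isClosedMap_iff_kernImage.1 hπ (hO y))
    (fun y _ ↦ mem_iUnion.2 ⟨y, singleton_subset_iff.1 (subset_kernImage_iff.2 (hfiber y))⟩)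
  exact ⟨V, hV, fun y ↦ (hVO y (mem_univ y)).imp fun _ ↦ subset_kernImage_iff.1⟩

namespace Dynamics

variable {X Y : Type*}

lemma mem_dynEntourage_mul_iff {T : X → X} {U : SetRel X X} {n k : ℕ} {x y : X} :
    (x, y) ∈ dynEntourage T U (n * k) ↔
      ∀ j < k, (T^[n * j] x, T^[n * j] y) ∈ dynEntourage T U n := by
  simp only [mem_dynEntourage, ← iterate_add_apply]
  refine ⟨fun h j hj i hi ↦ h _ ?_, fun h i hi ↦ ?_⟩
  · nlinarith
  · have hn : 0 < n := Nat.pos_of_ne_zero (by rintro rfl; simp at hi)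
    simpa only [Nat.mod_add_div] using h (i / n) (Nat.div_lt_of_lt_mul hi) (i % n) (Nat.mod_lt i hn)

lemma exists_forall_mem_dynEntourage_mul [Nonempty X] (T : X → X) (U : SetRel X X) [U.IsSymm]
    (n k : ℕ) (f : Fin k → X) :
    ∃ c, ∀ x, (∀ j : Fin k, (T^[n * j] x, f j) ∈ dynEntourage T U n) →
      (x, c) ∈ dynEntourage T (U ○ U) (n * k) := by
  by_cases hf : ∃ c, ∀ j : Fin k, (T^[n * j] c, f j) ∈ dynEntourage T U n
  · obtain ⟨c, hc⟩ := hf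
    refine ⟨c, fun x hx ↦ mem_dynEntourage_mul_iff.2 fun j hj ↦ ?_⟩
    exact dynEntourage_comp_subset T U U n ⟨f ⟨j, hj⟩, hx ⟨j, hj⟩, SetRel.symm _ (hc ⟨j, hj⟩)⟩
  · exact ⟨Classical.arbitrary X, fun x hx ↦ (hf ⟨x, hx⟩).elim⟩

lemma IsDynCoverOf.exists_isDynCoverOf_of_semiconj [Nonempty X] {T : X → X} {S : Y → Y}
    {π : X → Y} (h : Semiconj π T S) {U : SetRel X X} [U.IsSymm] {V : SetRel Y Y} [V.IsSymm]
    {n k M : ℕ} (hn : n ≠ 0)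
    (hV : ∀ y, ∃ t : Finset X, t.card ≤ M ∧ IsDynCoverOf T (π ⁻¹' ball y V) U n t)
    {s : Finset Y} (hs : IsDynCoverOf S univ V (n * k) s) :
    ∃ c : Finset X, IsDynCoverOf T univ (U ○ U) (n * k) c ∧ c.card ≤ s.card * M ^ k := by
  classical
  choose t ht_card ht using hV
  choose center hcenter using exists_forall_mem_dynEntourage_mul T U n k
  let itineraries := s.sigma fun y ↦ Fintype.piFinset fun j : Fin k ↦ t (S^[n * j] y)
  refine ⟨itineraries.image fun p ↦ center p.2, fun x _ ↦ ?_, ?_⟩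
  · obtain ⟨y, hy, hxy⟩ := hs (mem_univ (π x))
    have hstep (j : Fin k) :
        ∃ z ∈ t (S^[n * j] y), (T^[n * j] x, z) ∈ dynEntourage T U n := by
      refine ht _ ?_
      rw [mem_preimage, (h.iterate_right _).eq, mem_ball_symmetry]
      exact mem_dynEntourage.1 hxy _ ((Nat.mul_lt_mul_left (Nat.pos_of_ne_zero hn)).2 j.2)
    choose f hf hfx using hstep
    refine ⟨center f, ?_, hcenter f x hfx⟩
    exact Finset.mem_image.2 ⟨⟨y, f⟩, Finset.mem_sigma.2 ⟨hy, Fintype.mem_piFinset.2 hf⟩, rfl⟩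
  · calc (itineraries.image _).card ≤ itineraries.card := Finset.card_image_le
      _ = ∑ y ∈ s, ∏ j : Fin k, (t (S^[n * j] y)).card := by
        simp only [itineraries, Finset.card_sigma, Fintype.card_piFinset]
      _ ≤ ∑ _y ∈ s, M ^ k := Finset.sum_le_sum fun y _ ↦
        (Finset.prod_le_pow_card _ _ _ fun j _ ↦ ht_card _).trans_eq (by simp)
      _ = s.card * M ^ k := by simp

lemma exists_mem_uniformity_isDynCoverOf_preimage_ball [UniformSpace X] [UniformSpace Y]
    [CompactSpace Y] {T : X → X} (hT : Continuous T) {π : X → Y} (hπ : IsClosedMap π) {M : ℕ}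
    (hfin : ∀ y, (π ⁻¹' {y}).Finite) (hbound : ∀ y, (π ⁻¹' {y}).ncard ≤ M) {U : SetRel X X}
    (hU : U ∈ 𝓤 X) (n : ℕ) :
    ∃ V ∈ 𝓤 Y, ∀ y, ∃ t : Finset X, t.card ≤ M ∧ IsDynCoverOf T (π ⁻¹' ball y V) U n t := by
  obtain ⟨U', ⟨hU', hU'_open⟩, hU'U⟩ := uniformity_hasBasis_open.mem_iff.1 hU
  obtain ⟨V, hV, hVO⟩ := hπ.exists_mem_uniformity_preimage_ball_subset
    (O := fun y ↦ ⋃ x ∈ π ⁻¹' {y}, (·, x) ⁻¹' dynEntourage T U' n)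
    (fun y ↦ isOpen_biUnion fun x _ ↦
      (isOpen.dynEntourage hT hU'_open n).preimage (.prodMk_left x))
    (fun y x hx ↦ mem_biUnion hx (mem_dynEntourage.2 fun _ _ ↦ refl_mem_uniformity hU'))
  refine ⟨V, hV, fun y ↦ ?_⟩
  obtain ⟨y', hy'⟩ := hVO y
  refine ⟨(hfin y').toFinset, (ncard_eq_toFinset_card _ (hfin y')).symm.trans_le (hbound y'), ?_⟩
  refine IsDynCoverOf.of_entourage_subset hU'U fun x' hx' ↦ ?_
  obtain ⟨x, hx, hx'x⟩ := mem_iUnion₂.1 (hy' hx')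
  exact ⟨x, (hfin y').mem_toFinset.2 hx, hx'x⟩

lemma natCast_mul_coverEntropyEntourage_le_of_semiconj [Nonempty X] [UniformSpace X]
    [UniformSpace Y] [CompactSpace Y] {T : X → X} {S : Y → Y} {π : X → Y} (hT : Continuous T)
    (hπ : IsClosedMap π) (h : Semiconj π T S) {M : ℕ} (hM : M ≠ 0)
    (hfin : ∀ y, (π ⁻¹' {y}).Finite) (hbound : ∀ y, (π ⁻¹' {y}).ncard ≤ M) {U : SetRel X X}
    (hU : U ∈ 𝓤 X) [U.IsSymm] {n : ℕ} (hn : n ≠ 0) :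
    n * coverEntropyEntourage T univ (U ○ U) ≤ n * coverEntropy S univ + log M := by
  obtain ⟨V₀, hV₀, hcover₀⟩ :=
    exists_mem_uniformity_isDynCoverOf_preimage_ball hT hπ hfin hbound hU n
  obtain ⟨V, hV, hV_symm, hVV₀⟩ := symm_of_uniformity hV₀
  have hcover (y : Y) : ∃ t : Finset X, t.card ≤ M ∧ IsDynCoverOf T (π ⁻¹' ball y V) U n t :=
    (hcover₀ y).imp fun _ ht ↦
      ⟨ht.1, ht.2.monotone_subset (preimage_mono (ball_mono hVV₀ y))⟩
  have hcount (k : ℕ) :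
      coverMincard T univ (U ○ U) (n * k) ≤ coverMincard S univ V (n * k) * M ^ k := by
    obtain ⟨s, hs, hs_card⟩ := (coverMincard_finite_iff S univ V (n * k)).1
      (coverMincard_finite_of_isCompact_invariant isCompact_univ (mapsTo_univ S univ) hV _)
    obtain ⟨c, hc, hc_card⟩ := hs.exists_isDynCoverOf_of_semiconj h hn hcover
    rw [← hs_card]
    exact hc.coverMincard_le_card.trans (by exact_mod_cast hc_card)
  calc n * coverEntropyEntourage T univ (U ○ U)
      ≤ n * coverEntropyEntourage S univ V + log M := by
        refine natCast_mul_expGrowthSup_le_of_le_mul_pow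
          (fun _ _ h ↦ ENat.toENNReal_mono (coverMincard_monotone_time _ _ _ h))
          (fun _ _ h ↦ ENat.toENNReal_mono (coverMincard_monotone_time _ _ _ h)) hn
          (Nat.cast_ne_zero.2 hM) (natCast_ne_top M) fun k ↦ ?_
        simpa using ENat.toENNReal_mono (hcount k)
    _ ≤ n * coverEntropy S univ + log M := by
        gcongr
        exact coverEntropyEntourage_le_coverEntropy S univ hV

lemma coverEntropy_le_of_semiconj_of_finite_fibers [UniformSpace X] [UniformSpace Y]
    [CompactSpace Y] {T : X → X} {S : Y → Y} {π : X → Y} (hT : Continuous T)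
    (hπ : IsClosedMap π) (h : Semiconj π T S) {M : ℕ} (hfin : ∀ y, (π ⁻¹' {y}).Finite)
    (hbound : ∀ y, (π ⁻¹' {y}).ncard ≤ M) :
    coverEntropy T univ ≤ coverEntropy S univ := by
  rcases isEmpty_or_nonempty X with hX | hX
  · simp [univ_eq_empty_iff.2 hX]
  have hM : M ≠ 0 := by
    obtain ⟨x⟩ := hX
    exact (((ncard_pos (hfin (π x))).2 ⟨x, rfl⟩).trans_le (hbound _)).ne'
  refine iSup₂_le fun U hU ↦ ?_
  obtain ⟨W, hW, hW_symm, hWU⟩ := comp_symm_mem_uniformity_sets hU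
  refine (coverEntropyEntourage_antitone T univ hWU).trans ?_
  refine EReal.le_of_forall_natCast_mul_le_mul_add (log_eq_top_iff.not.2 (natCast_ne_top M))
    fun n hn ↦ ?_
  exact natCast_mul_coverEntropyEntourage_le_of_semiconj hT hπ h hM hfin hbound hW hn

end Dynamics

theorem pseudo_suspension_stmt10_general
    {X Y : Type*} [MetricSpace X] [CompactSpace X] [MetricSpace Y] [CompactSpace Y]
    (T : X → X) (S : Y → Y) (hT : Continuous T)
    (π : X → Y) (hπ : Continuous π) (hsurj : Function.Surjective π)
    (hsemi : ∀ x : X, π (T x) = S (π x))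
    (M : ℕ)
    (hfin : ∀ y : Y, (π ⁻¹' {y}).Finite)
    (hbound : ∀ y : Y, (π ⁻¹' {y}).ncard ≤ M) :
    coverEntropy T (Set.univ : Set X) = coverEntropy S (Set.univ : Set Y) := by
  refine le_antisymm
    (coverEntropy_le_of_semiconj_of_finite_fibers hT hπ.isClosedMap hsemi hfin hbound) ?_
  have := coverEntropy_image_le_of_uniformContinuous hsemi
    (CompactSpace.uniformContinuous_of_continuous hπ) univ
  rwa [image_univ, hsurj.range_eq] at this

/-- Bowen: If `π : X → Y` is a continuous surjective factor map between
compact metric dynamical systems `(X, T)` and `(Y, S)` (so `π ∘ T = S ∘ π`) whose fibers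
have uniformly bounded finite cardinality, then the topological entropies coincide. -/
theorem pseudo_suspension_stmt10
    {X Y : Type*} [MetricSpace X] [CompactSpace X] [MetricSpace Y] [CompactSpace Y]
    (T : X → X) (S : Y → Y) (hT : Continuous T) (hS : Continuous S)
    (π : X → Y) (hπ : Continuous π) (hsurj : Function.Surjective π)
    (hsemi : ∀ x : X, π (T x) = S (π x))
    (M : ℕ)
    (hfin : ∀ y : Y, (π ⁻¹' {y}).Finite)
    (hbound : ∀ y : Y, (π ⁻¹' {y}).ncard ≤ M) :
    coverEntropy T (Set.univ : Set X) = coverEntropy S (Set.univ : Set Y) :=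
  pseudo_suspension_stmt10_general T S hT π hπ hsurj hsemi M hfin hbound
end
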